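/- arXiv:math/0703111 — 6 statements merged into one kernel-verified Lean document; each statement's English description precedes it below -/
import Mathlib

section
/- There exists a constant C > 0 such that for every positive integer p and every integer m ≥ 2, the sum S_m² := Σ_{k=0}^m ∏_{j=1}^p (k+j)^{-2}(m-k+j)^{-2} satisfies S_m² ≤ C/m^{2p}, where C may depend on p but not on m. -/
/-!
For `j ≥ 1` the factor `(k + j + 1)(m - k + j + 1)` is at least `m`, so the sum is at most
`m ^ (-2(p - 1))` times the sum for `p = 1`. For that sum write `a = k + 1`, `b = m - k + 1`:
since `a + b = m + 2`, the identity `1 / (ab) = (1/a + 1/b) / (a + b)` gives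
`1 / (a²b²) ≤ 2 (1/a² + 1/b²) / (m + 2)²`, and `∑ 1/n² ≤ 2` bounds it by `8 / (m + 2)²`.
-/

open Finset

lemma sum_range_inv_succ_sq_le_two (n : ℕ) :
    ∑ k ∈ range n, (((k : ℝ) + 1) ^ 2)⁻¹ ≤ 2 := by
  have h := sum_Ioo_inv_sq_le (α := ℝ) 0 (n + 1)
  rw [← Finset.Ico_add_one_left_eq_Ioo, sum_Ico_eq_sum_range] at h
  simpa [add_comm] using h

lemma inv_sq_mul_sq_le {a b : ℝ} (ha : 0 < a) (hb : 0 < b) :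
    (a ^ 2 * b ^ 2)⁻¹ ≤ 2 / (a + b) ^ 2 * ((a ^ 2)⁻¹ + (b ^ 2)⁻¹) := by
  have hab : (a * b)⁻¹ = (a⁻¹ + b⁻¹) / (a + b) := by field_simp; ring
  calc (a ^ 2 * b ^ 2)⁻¹ = ((a⁻¹ + b⁻¹) / (a + b)) ^ 2 := by rw [← hab, ← mul_pow, inv_pow]
    _ = (a⁻¹ + b⁻¹) ^ 2 / (a + b) ^ 2 := div_pow _ _ _
    _ ≤ 2 * (a⁻¹ ^ 2 + b⁻¹ ^ 2) / (a + b) ^ 2 := by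
        gcongr; nlinarith [sq_nonneg (a⁻¹ - b⁻¹)]
    _ = 2 / (a + b) ^ 2 * ((a ^ 2)⁻¹ + (b ^ 2)⁻¹) := by rw [inv_pow, inv_pow]; ring

lemma sum_range_inv_sq_mul_sq_le (m : ℕ) :
    ∑ k ∈ range (m + 1), (((k : ℝ) + 1) ^ 2 * ((m : ℝ) - k + 1) ^ 2)⁻¹
      ≤ 8 / ((m : ℝ) + 2) ^ 2 := by
  have hreflect : ∑ k ∈ range (m + 1), (((m : ℝ) - k + 1) ^ 2)⁻¹
      = ∑ k ∈ range (m + 1), (((k : ℝ) + 1) ^ 2)⁻¹ := by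
    rw [← sum_range_reflect]
    refine sum_congr rfl fun k hk => ?_
    rw [Nat.add_sub_cancel, Nat.cast_sub (Nat.le_of_lt_succ (mem_range.mp hk)), sub_sub_cancel]
  calc ∑ k ∈ range (m + 1), (((k : ℝ) + 1) ^ 2 * ((m : ℝ) - k + 1) ^ 2)⁻¹
      ≤ ∑ k ∈ range (m + 1),
          2 / ((m : ℝ) + 2) ^ 2 * ((((k : ℝ) + 1) ^ 2)⁻¹ + (((m : ℝ) - k + 1) ^ 2)⁻¹) := by
        refine sum_le_sum fun k hk => ?_
        have hkm : (k : ℝ) ≤ m := by exact_mod_cast Nat.le_of_lt_succ (mem_range.mp hk)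
        have h := inv_sq_mul_sq_le (a := (k : ℝ) + 1) (b := (m : ℝ) - k + 1)
          (by positivity) (by linarith)
        rwa [show (k : ℝ) + 1 + ((m : ℝ) - k + 1) = m + 2 by ring] at h
    _ = 2 / ((m : ℝ) + 2) ^ 2 * (2 * ∑ k ∈ range (m + 1), (((k : ℝ) + 1) ^ 2)⁻¹) := by
        rw [← mul_sum, sum_add_distrib, hreflect, two_mul]
    _ ≤ 2 / ((m : ℝ) + 2) ^ 2 * (2 * 2) := by
        gcongr; exact sum_range_inv_succ_sq_le_two _
    _ = 8 / ((m : ℝ) + 2) ^ 2 := by ring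

lemma add_le_add_mul_add {x y c : ℝ} (hx : 0 ≤ x) (hy : 0 ≤ y) (hc : 1 ≤ c) :
    x + y ≤ (x + c) * (y + c) := by
  nlinarith [mul_nonneg hx hy]

lemma prod_range_succ_inv_sq_mul_sq_le {x y : ℝ} (hx : 0 ≤ x) (hy : 0 ≤ y) (hxy : 0 < x + y)
    (q : ℕ) :
    ∏ j ∈ range (q + 1), ((x + j + 1) ^ 2 * (y + j + 1) ^ 2)⁻¹
      ≤ ((x + 1) ^ 2 * (y + 1) ^ 2)⁻¹ * (((x + y) ^ 2)⁻¹) ^ q := by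
  rw [prod_range_succ', mul_comm, Nat.cast_zero, add_zero, add_zero]
  gcongr
  calc ∏ j ∈ range q, ((x + ↑(j + 1) + 1) ^ 2 * (y + ↑(j + 1) + 1) ^ 2)⁻¹
      ≤ ∏ _j ∈ range q, ((x + y) ^ 2)⁻¹ := by
        refine prod_le_prod (fun j _ => by positivity) fun j _ => ?_
        have hj : (1 : ℝ) ≤ ↑(j + 1) + 1 := by push_cast; linarith [(j.cast_nonneg : (0 : ℝ) ≤ j)]
        rw [← mul_pow, add_assoc, add_assoc]
        gcongr
        exact add_le_add_mul_add hx hy hj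
    _ = (((x + y) ^ 2)⁻¹) ^ q := by rw [prod_const, card_range]

theorem Sm_sq_le (p : ℕ) (hp : 1 ≤ p) :
    ∃ C > 0, ∀ m : ℕ, 2 ≤ m →
      (∑ k ∈ Finset.range (m + 1),
          ∏ j ∈ Finset.range p,
            (((k : ℝ) + j + 1) ^ 2 * ((m : ℝ) - k + j + 1) ^ 2)⁻¹)
        ≤ C / (m : ℝ) ^ (2 * p) := by
  obtain ⟨q, rfl⟩ : ∃ q, p = q + 1 := ⟨p - 1, by omega⟩
  refine ⟨8, by norm_num, fun m hm => ?_⟩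
  have hm0 : (0 : ℝ) < m := Nat.cast_pos.mpr (by omega)
  calc (∑ k ∈ range (m + 1), ∏ j ∈ range (q + 1),
          (((k : ℝ) + j + 1) ^ 2 * ((m : ℝ) - k + j + 1) ^ 2)⁻¹)
      ≤ ∑ k ∈ range (m + 1),
          (((k : ℝ) + 1) ^ 2 * ((m : ℝ) - k + 1) ^ 2)⁻¹ * (((m : ℝ) ^ 2)⁻¹) ^ q := by
        refine sum_le_sum fun k hk => ?_
        have hkm : (k : ℝ) ≤ m := by exact_mod_cast Nat.le_of_lt_succ (mem_range.mp hk)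
        simpa using prod_range_succ_inv_sq_mul_sq_le k.cast_nonneg (sub_nonneg.mpr hkm)
          (by simpa using hm0) q
    _ = (∑ k ∈ range (m + 1), (((k : ℝ) + 1) ^ 2 * ((m : ℝ) - k + 1) ^ 2)⁻¹)
          * (((m : ℝ) ^ 2)⁻¹) ^ q := by rw [sum_mul]
    _ ≤ 8 / (m : ℝ) ^ 2 * (((m : ℝ) ^ 2)⁻¹) ^ q := by
        gcongr
        exact (sum_range_inv_sq_mul_sq_le m).trans (by gcongr; linarith)
    _ = 8 / (m : ℝ) ^ (2 * (q + 1)) := by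
        rw [pow_mul, inv_pow]; field_simp; ring
end

section
/- Let A be a complex number with AB = -1 for B complex, and let m ≥ 4 be an even integer. Then the 3×3 determinant N_m := det [[-2, (-1)^{m-1}-1, (-1)^m-1], [A-1, A^{m-1}-1, A^m-1], [B-1, B^{m-1}-1, B^m-1]] satisfies A^m · N_m = 4A(A^m-1)(A^{m-2}-1). -/
/-! Since `m` is even, the first row is `(-2, -2, 0)`, and writing `x = A ^ (m - 2)`,
`y = B ^ (m - 2)` we have `x * y = 1`. Multiplying the last row by `A ^ m = x * A ^ 2` and using
`A * B = -1` turns it into `(-x * A - x * A ^ 2, -A - x * A ^ 2, 1 - x * A ^ 2)`, which involves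
`A` alone; the determinant is then a polynomial identity in `A` and `x`. -/

open Matrix

section

variable {R : Type*} [CommRing R]

theorem Matrix.mul_det_of_fin_three_eq_det_smul_row_two (c : R) (u v w : Fin 3 → R) :
    c * (of ![u, v, w]).det = (of ![u, v, c • w]).det := by
  have hupdate : ∀ w' : Fin 3 → R, (of ![u, v, w]).updateRow 2 w' = of ![u, v, w'] := by
    intro w'
    ext i j
    fin_cases i <;> rfl
  rw [← hupdate (c • w), det_updateRow_smul, hupdate]

theorem mul_det_of_mul_eq_neg_one {A B x y : R} (hAB : A * B = -1) (hxy : x * y = 1) :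
    x * A ^ 2 *
        (!![-2, -2, 0;
            A - 1, x * A - 1, x * A ^ 2 - 1;
            B - 1, y * B - 1, y * B ^ 2 - 1]).det
      = 4 * A * (x * A ^ 2 - 1) * (x - 1) := by
  have hrow : (x * A ^ 2) • ![B - 1, y * B - 1, y * B ^ 2 - 1]
      = ![-(x * A) - x * A ^ 2, -A - x * A ^ 2, 1 - x * A ^ 2] := by
    ext i
    fin_cases i <;> simp only [Fin.zero_eta, Fin.mk_one, Fin.reduceFinMk, Pi.smul_apply,
      cons_val_zero, cons_val_one, cons_val, smul_eq_mul]
    · linear_combination x * A * hAB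
    · linear_combination A * x * y * hAB - A * hxy
    · linear_combination x * y * (A * B - 1) * hAB + hxy
  rw [mul_det_of_fin_three_eq_det_smul_row_two, hrow]
  simp [det_fin_three]
  ring

end

theorem det_Nm_even (A B : ℂ) (hAB : A * B = -1) (m : ℕ) (hm : 4 ≤ m)
    (hme : Even m) :
    A ^ m *
        (!![(-2 : ℂ), (-1 : ℂ) ^ (m - 1) - 1, (-1 : ℂ) ^ m - 1;
            A - 1, A ^ (m - 1) - 1, A ^ m - 1;
            B - 1, B ^ (m - 1) - 1, B ^ m - 1]).det
      = 4 * A * (A ^ m - 1) * (A ^ (m - 2) - 1) := by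
  obtain ⟨n, rfl⟩ : ∃ n, m = n + 2 := ⟨m - 2, by omega⟩
  have hn : Even n := by simpa [parity_simps] using hme
  have hxy : A ^ n * B ^ n = 1 := by rw [← mul_pow, hAB, hn.neg_one_pow]
  simp only [Nat.add_sub_cancel, Nat.add_succ_sub_one, pow_add, pow_one, hn.neg_one_pow]
  norm_num
  exact mul_det_of_mul_eq_neg_one hAB hxy
end

section
/- Let A be a nonzero complex number, B = -1/A, and let m be an odd integer. Then the 3×3 determinant N_m := det [[-2, (-1)^{m-1}-1, (-1)^m-1], [A-1, A^{m-1}-1, A^m-1], [B-1, B^{m-1}-1, B^m-1]] satisfies A^m · N_m = -2(A^{m-1}-1)²(A²+1). -/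
open Matrix

/-! Writing `m = 2k + 1`, every row of the matrix has the shape `(a - 1, b - 1, b a - 1)` with
`b = a ^ (m - 1)`, and the first row degenerates to `(-2, 0, -2)` because `m - 1` is even.
Expanding along it gives `-2 (b₁ - 1)(b₂ - 1)(a₂ - a₁)`; with `a₁ = A`, `a₂ = -1/A`, `b₁ = A ^ 2k`,
`b₂ = A ^ -2k`, multiplying by `A ^ m` clears the denominators. -/

theorem det_fin_three_rows_sub_one {R : Type*} [CommRing R] (c a₁ a₂ b₁ b₂ : R) :
    !![c, 0, c; a₁ - 1, b₁ - 1, b₁ * a₁ - 1; a₂ - 1, b₂ - 1, b₂ * a₂ - 1].det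
      = c * (b₁ - 1) * (b₂ - 1) * (a₂ - a₁) := by
  rw [det_fin_three]
  simp only [of_apply, cons_val', cons_val_zero, cons_val_one, cons_val_two, empty_val',
    cons_val_fin_one, head_cons, tail_cons, head_fin_const]
  ring

theorem det_Nm_odd_general (A : ℂ) (hA : A ≠ 0) (B : ℂ) (hB : B = -1 / A)
    (m : ℕ) (hmo : Odd m) :
    A ^ m *
        (!![(-2 : ℂ), (-1 : ℂ) ^ (m - 1) - 1, (-1 : ℂ) ^ m - 1;
            A - 1, A ^ (m - 1) - 1, A ^ m - 1;
            B - 1, B ^ (m - 1) - 1, B ^ m - 1]).det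
      = -2 * (A ^ (m - 1) - 1) ^ 2 * (A ^ 2 + 1) := by
  obtain ⟨k, rfl⟩ := hmo
  have hk : 2 * k + 1 - 1 = 2 * k := by omega
  have hneg : (-1 : ℂ) ^ (2 * k) = 1 := (even_two_mul k).neg_one_pow
  rw [hk, pow_succ A, pow_succ B, pow_succ (-1 : ℂ), hneg, sub_self,
    show (1 : ℂ) * -1 - 1 = -2 by norm_num, det_fin_three_rows_sub_one, hB, div_pow, hneg]
  field_simp
  ring

theorem det_Nm_odd (A : ℂ) (hA : A ≠ 0) (B : ℂ) (hB : B = -1 / A)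
    (m : ℕ) (hm : 1 ≤ m) (hmo : Odd m) :
    A ^ m *
        (!![(-2 : ℂ), (-1 : ℂ) ^ (m - 1) - 1, (-1 : ℂ) ^ m - 1;
            A - 1, A ^ (m - 1) - 1, A ^ m - 1;
            B - 1, B ^ (m - 1) - 1, B ^ m - 1]).det
      = -2 * (A ^ (m - 1) - 1) ^ 2 * (A ^ 2 + 1) :=
  det_Nm_odd_general A hA B hB m hmo
end

section
/- Let A = e^{2πiβ} with β real and B = -1/A, and suppose |A^m - 1| ≥ C'/m^{μ-1} for all positive integers m, for some C' > 0 and μ ≥ 2. Then there is a constant D > 0 such that the determinant N_m := det [[-2, (-1)^{m-1}-1, (-1)^m-1], [A-1, A^{m-1}-1, A^m-1], [B-1, B^{m-1}-1, B^m-1]] satisfies |N_m| ≥ D/m^{2μ-2} for all integers m ≥ 3. -/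
/-!
Since `A * B = -1`, multiplying `N_m` by the unimodular factor `A ^ m` turns it into a product
of factors `A ^ k - 1` with `k ≤ m`, and of `A ^ 2 + 1` when `m` is odd. Each `A ^ k - 1` is
bounded below by the Diophantine hypothesis, and `A ^ 2 + 1 ≠ 0` because `A ^ 4 ≠ 1`.
-/

open Complex Real Matrix

section Determinant

variable {R : Type*} [CommRing R]

/-- The matrix whose determinant is `N_m`. -/
def nmMatrix (A B : R) (m : ℕ) : Matrix (Fin 3) (Fin 3) R :=
  !![(-2 : R), (-1 : R) ^ (m - 1) - 1, (-1 : R) ^ m - 1;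
     A - 1, A ^ (m - 1) - 1, A ^ m - 1;
     B - 1, B ^ (m - 1) - 1, B ^ m - 1]

theorem det_nmMatrix (A B : R) (m : ℕ) : (nmMatrix A B m).det =
    -2 * (A ^ (m - 1) - 1) * (B ^ m - 1) + 2 * (A ^ m - 1) * (B ^ (m - 1) - 1)
      - ((-1) ^ (m - 1) - 1) * ((A - 1) * (B ^ m - 1) - (A ^ m - 1) * (B - 1))
      + ((-1) ^ m - 1) * ((A - 1) * (B ^ (m - 1) - 1) - (A ^ (m - 1) - 1) * (B - 1)) := by
  simp only [nmMatrix, det_fin_three, of_apply, cons_val', cons_val_zero, cons_val_one,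
    cons_val_two, head_cons, tail_cons, empty_val', cons_val_fin_one, head_fin_const]
  ring

theorem pow_mul_det_nmMatrix_of_even {A B : R} (hAB : A * B = -1) {m : ℕ} (hm : Even m) :
    A ^ m * (nmMatrix A B m).det = 4 * A * (A ^ m - 1) * (A ^ (m - 2) - 1) := by
  obtain ⟨k, rfl⟩ := hm
  rcases k with _ | k
  · simp [det_nmMatrix]
  have hab : A ^ (2 * k) * B ^ (2 * k) = 1 := by
    rw [← mul_pow, hAB, (even_two_mul k).neg_one_pow]
  rw [show k + 1 + (k + 1) = 2 * k + 2 by ring, det_nmMatrix,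
    show 2 * k + 2 - 1 = 2 * k + 1 by omega, Nat.add_sub_cancel]
  simp only [pow_succ _ (2 * k + 1), pow_succ _ (2 * k), (even_two_mul k).neg_one_pow]
  generalize A ^ (2 * k) = a, B ^ (2 * k) = b at hab ⊢
  linear_combination (-2*A^2*B + 2*A^3*B^2 - 2*a*A^3*B^2 + 2*a*A^4*B) * hab +
        (-4*A + 2*A^2*B + 4*a*A - 2*a*A^2*B + 2*a*A^3 - 2*a^2*A^3) * hAB

theorem pow_mul_det_nmMatrix_of_odd {A B : R} (hAB : A * B = -1) {m : ℕ} (hm : Odd m) :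
    A ^ m * (nmMatrix A B m).det = -2 * (A ^ (m - 1) - 1) ^ 2 * (A ^ 2 + 1) := by
  obtain ⟨k, rfl⟩ := hm
  have hab : A ^ (2 * k) * B ^ (2 * k) = 1 := by
    rw [← mul_pow, hAB, (even_two_mul k).neg_one_pow]
  rw [det_nmMatrix, Nat.add_sub_cancel]
  simp only [pow_succ _ (2 * k), (even_two_mul k).neg_one_pow]
  generalize A ^ (2 * k) = a, B ^ (2 * k) = b at hab ⊢
  linear_combination (-2 * (a - 1) * A * B + 2 * A * (a * A - 1) - 2 * A * (A - 1)) * hab +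
    2 * (a - 1) ^ 2 * hAB

end Determinant

section Norms

variable {𝕜 : Type*} [RCLike 𝕜] {A B : 𝕜} {m : ℕ}

theorem norm_det_nmMatrix_of_even (hA : ‖A‖ = 1) (hAB : A * B = -1) (hm : Even m) :
    ‖(nmMatrix A B m).det‖ = 4 * ‖A ^ m - 1‖ * ‖A ^ (m - 2) - 1‖ := by
  simpa [hA] using congrArg norm (pow_mul_det_nmMatrix_of_even hAB hm)

theorem norm_det_nmMatrix_of_odd (hA : ‖A‖ = 1) (hAB : A * B = -1) (hm : Odd m) :
    ‖(nmMatrix A B m).det‖ = 2 * ‖A ^ (m - 1) - 1‖ ^ 2 * ‖A ^ 2 + 1‖ := by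
  simpa [hA] using congrArg norm (pow_mul_det_nmMatrix_of_odd hAB hm)

end Norms

theorem sq_add_one_ne_zero_of_pow_four_ne_one {R : Type*} [CommRing R] {A : R} (h : A ^ 4 ≠ 1) :
    A ^ 2 + 1 ≠ 0 := by
  contrapose! h
  linear_combination (A ^ 2 - 1) * h

theorem div_rpow_le_div_rpow_of_le {C' μ : ℝ} (hC' : 0 ≤ C') (hμ : 1 ≤ μ) {n m : ℕ} (hn : 1 ≤ n)
    (hnm : n ≤ m) : C' / (m : ℝ) ^ (μ - 1) ≤ C' / (n : ℝ) ^ (μ - 1) := by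
  have hn' : (0 : ℝ) < n := by exact_mod_cast hn
  gcongr

theorem det_Nm_lower_bound (β : ℝ) (A : ℂ)
    (hA : A = Complex.exp (2 * Real.pi * Complex.I * β))
    (B : ℂ) (hB : B = -1 / A) (C' μ : ℝ) (hC' : 0 < C') (hμ : 2 ≤ μ)
    (h : ∀ m : ℕ, 1 ≤ m → C' / (m : ℝ) ^ (μ - 1) ≤ ‖A ^ m - 1‖) :
    ∃ D > 0, ∀ m : ℕ, 3 ≤ m →
      D / (m : ℝ) ^ (2 * μ - 2) ≤
        ‖(!![(-2 : ℂ), (-1 : ℂ) ^ (m - 1) - 1, (-1 : ℂ) ^ m - 1;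
              A - 1, A ^ (m - 1) - 1, A ^ m - 1;
              B - 1, B ^ (m - 1) - 1, B ^ m - 1]).det‖ := by
  have hA1 : ‖A‖ = 1 := by rw [hA, Complex.norm_exp]; simp
  have hAB : A * B = -1 := by
    rw [hB, mul_div_assoc', mul_neg_one, neg_div, div_self (by rw [hA]; exact Complex.exp_ne_zero _)]
  have hA2 : A ^ 2 + 1 ≠ 0 := sq_add_one_ne_zero_of_pow_four_ne_one fun h4 => by
    have := h 4 (by norm_num)
    rw [h4, sub_self, norm_zero] at this
    exact (div_pos hC' (by positivity)).not_ge this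
  refine ⟨C' ^ 2 * min 4 (2 * ‖A ^ 2 + 1‖), by positivity, fun m hm => ?_⟩
  set t := C' / (m : ℝ) ^ (μ - 1) with ht
  have hsq : C' ^ 2 * min 4 (2 * ‖A ^ 2 + 1‖) / (m : ℝ) ^ (2 * μ - 2) =
      min 4 (2 * ‖A ^ 2 + 1‖) * t ^ 2 := by
    have hpow : (m : ℝ) ^ (2 * μ - 2) = ((m : ℝ) ^ (μ - 1)) ^ 2 := by
      rw [← Real.rpow_mul_natCast (by positivity)]; ring_nf
    rw [hpow, ht]; ring
  have ht0 : 0 ≤ t := by positivity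
  have htm : ∀ n, 1 ≤ n → n ≤ m → t ≤ ‖A ^ n - 1‖ := fun n hn hnm =>
    (div_rpow_le_div_rpow_of_le hC'.le (by linarith) hn hnm).trans (h n hn)
  change _ ≤ ‖(nmMatrix A B m).det‖
  rw [hsq]
  rcases Nat.even_or_odd m with hm' | hm'
  · rw [norm_det_nmMatrix_of_even hA1 hAB hm']
    have h1 := htm m (by omega) le_rfl
    have h2 := htm (m - 2) (by omega) (by omega)
    calc min 4 (2 * ‖A ^ 2 + 1‖) * t ^ 2 ≤ 4 * t * t := by
          nlinarith [min_le_left 4 (2 * ‖A ^ 2 + 1‖)]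
      _ ≤ 4 * ‖A ^ m - 1‖ * ‖A ^ (m - 2) - 1‖ := by gcongr
  · rw [norm_det_nmMatrix_of_odd hA1 hAB hm']
    have h1 := htm (m - 1) (by omega) (by omega)
    calc min 4 (2 * ‖A ^ 2 + 1‖) * t ^ 2 ≤ 2 * t ^ 2 * ‖A ^ 2 + 1‖ := by
          nlinarith [min_le_right 4 (2 * ‖A ^ 2 + 1‖)]
      _ ≤ 2 * ‖A ^ (m - 1) - 1‖ ^ 2 * ‖A ^ 2 + 1‖ := by gcongr
end

section
/- Let β := Σ_{k=1}^∞ 10^{-p_k} with p_1 = 1 and p_{k+1} = p_k + k·10^{p_k}, and set A = e^{2πiβ}. Then liminf_{k→∞} |A^k - 1|^{1/k} = 0. -/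
/-!
With `q_N = 10 ^ P N`, the number `q_N * β` is an integer plus the tail
`∑_{k > N} 10 ^ (P N - P k)`, which is at most `(10/9) * 10 ^ (-(N + 1) * q_N)` since
`P (N + 1) - P N = (N + 1) * q_N`. As `‖A ^ q - 1‖ ≤ 2π * dist (q * β) ℤ`, the `q_N`-th root of
`‖A ^ q_N - 1‖` is at most a constant times `10 ^ (-(N + 1))`, which tends to `0`.
-/

open Filter Complex Real Topology

theorem Filter.liminf_eq_zero_of_tendsto_comp {ι α : Type*} {l : Filter ι} [l.NeBot]
    {l' : Filter α} {f : α → ℝ} (hf : ∀ a, 0 ≤ f a) {q : ι → α} (hq : Tendsto q l l')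
    (hfq : Tendsto (f ∘ q) l (𝓝 0)) : liminf f l' = 0 := by
  have hcobdd : (map q l).IsCoboundedUnder (· ≥ ·) f := by
    simpa [IsCoboundedUnder, map_map] using hfq.isBoundedUnder_le.isCoboundedUnder_ge
  have hfreq : ∃ᶠ a in l', f a ≤ 1 :=
    hq.frequently ((hfq.eventually (ge_mem_nhds one_pos)).frequently)
  refine le_antisymm ?_ ?_
  · exact (hq.liminf_le_liminf_comp hcobdd (isBoundedUnder_of ⟨0, hf⟩)).trans_eq hfq.liminf_eq
  · exact le_liminf_of_le (IsCoboundedUnder.of_frequently_le hfreq) (Eventually.of_forall hf)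

theorem norm_exp_two_pi_mul_I_sub_one_le (x : ℝ) (m : ℤ) :
    ‖exp (2 * π * I * x) - 1‖ ≤ 2 * π * |x - m| := by
  have hshift : exp (2 * π * I * x) = exp (I * ↑(2 * π * (x - m))) := by
    rw [show 2 * π * I * x = I * ↑(2 * π * (x - m)) + m * (2 * π * I) by push_cast; ring,
      Complex.exp_add, exp_int_mul_two_pi_mul_I, mul_one]
  rw [hshift]
  refine norm_exp_I_mul_ofReal_sub_one_le.trans_eq ?_
  rw [Real.norm_eq_abs, abs_mul, abs_of_pos two_pi_pos]

theorem norm_exp_two_pi_mul_I_pow_sub_one_le (x : ℝ) (q : ℕ) (m : ℤ) :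
    ‖exp (2 * π * I * x) ^ q - 1‖ ≤ 2 * π * |q * x - m| := by
  rw [← Complex.exp_nat_mul, show (q : ℂ) * (2 * π * I * x) = 2 * π * I * ↑(q * x) by push_cast; ring]
  exact norm_exp_two_pi_mul_I_sub_one_le _ m

theorem Real.rpow_one_div_le_of_le_mul_pow {a C r : ℝ} (ha : 0 ≤ a) (hC : 1 ≤ C) (hr : 0 ≤ r)
    {n q : ℕ} (hq : q ≠ 0) (h : a ≤ C * r ^ (n * q)) : a ^ (1 / (q : ℝ)) ≤ C * r ^ n := by
  have hq' : (1 : ℝ) ≤ q := Nat.one_le_cast.2 (Nat.one_le_iff_ne_zero.2 hq)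
  calc a ^ (1 / (q : ℝ)) ≤ (C * (r ^ n) ^ q) ^ (1 / (q : ℝ)) := by
        rw [← pow_mul]; gcongr
    _ = C ^ (1 / (q : ℝ)) * r ^ n := by
        rw [mul_rpow (by positivity) (by positivity), one_div, pow_rpow_inv_natCast (by positivity) hq]
    _ ≤ C * r ^ n := by
        gcongr
        exact rpow_le_self_of_one_le hC (by rw [one_div]; exact inv_le_one_of_one_le₀ hq')

theorem summable_pow_comp_strictMono {r : ℝ} (hr0 : 0 ≤ r) (hr1 : r < 1) {P : ℕ → ℕ}
    (hP : StrictMono P) : Summable fun k => r ^ P k :=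
  (summable_geometric_of_lt_one hr0 hr1).of_nonneg_of_le (fun _ => by positivity)
    fun k => pow_le_pow_of_le_one hr0 hr1.le (hP.id_le k)

theorem tsum_pow_comp_strictMono_add_le {r : ℝ} (hr0 : 0 ≤ r) (hr1 : r < 1) {P : ℕ → ℕ}
    (hP : StrictMono P) (n : ℕ) : ∑' i, r ^ P (i + n) ≤ r ^ P n / (1 - r) := by
  have hle : ∀ i, r ^ P (i + n) ≤ r ^ P n * r ^ i := fun i => by
    rw [← pow_add, add_comm (P n)]
    exact pow_le_pow_of_le_one hr0 hr1.le (hP.add_le_nat i n)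
  calc ∑' i, r ^ P (i + n) ≤ ∑' i, r ^ P n * r ^ i :=
        Summable.tsum_le_tsum hle ((summable_nat_add_iff n).2 (summable_pow_comp_strictMono hr0 hr1 hP))
          ((summable_geometric_of_lt_one hr0 hr1).mul_left _)
    _ = r ^ P n / (1 - r) := by
        rw [tsum_mul_left, tsum_geometric_of_lt_one hr0 hr1, div_eq_mul_inv]

theorem pow_mul_sum_inv_pow_eq_natCast {b : ℕ} (hb : b ≠ 0) {P : ℕ → ℕ} (hP : Monotone P) (N : ℕ) :
    (b : ℝ) ^ P N * ∑ k ∈ Finset.range (N + 1), ((b : ℝ)⁻¹) ^ P k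
      = ((∑ k ∈ Finset.range (N + 1), b ^ (P N - P k) : ℕ) : ℝ) := by
  rw [Finset.mul_sum]
  push_cast
  refine Finset.sum_congr rfl fun k hk => ?_
  rw [pow_sub₀ _ (Nat.cast_ne_zero.2 hb) (hP (Finset.mem_range_succ_iff.1 hk)), inv_pow]

theorem exists_int_abs_pow_mul_tsum_inv_pow_sub_le {b : ℕ} (hb : 1 < b) {P : ℕ → ℕ}
    (hP : StrictMono P) (N : ℕ) :
    ∃ m : ℤ, |(b : ℝ) ^ P N * ∑' k, ((b : ℝ)⁻¹) ^ P k - m|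
      ≤ (b : ℝ) ^ P N * ((b : ℝ)⁻¹) ^ P (N + 1) / (1 - (b : ℝ)⁻¹) := by
  set r : ℝ := (b : ℝ)⁻¹
  have hr0 : 0 ≤ r := by positivity
  have hr1 : r < 1 := inv_lt_one_of_one_lt₀ (by exact_mod_cast hb)
  refine ⟨((∑ k ∈ Finset.range (N + 1), b ^ (P N - P k) : ℕ) : ℤ), ?_⟩
  rw [← (summable_pow_comp_strictMono hr0 hr1 hP).sum_add_tsum_nat_add (N + 1), mul_add,
    Int.cast_natCast, ← pow_mul_sum_inv_pow_eq_natCast (by omega) hP.monotone, add_sub_cancel_left,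
    abs_of_nonneg (by positivity), mul_div_assoc]
  gcongr
  exact tsum_pow_comp_strictMono_add_le hr0 hr1 hP (N + 1)

theorem norm_exp_two_pi_mul_I_pow_sub_one_le_of_lacunary {P : ℕ → ℕ} (hP : StrictMono P) {N : ℕ}
    (hPN : P (N + 1) = P N + (N + 1) * 10 ^ P N) :
    ‖exp (2 * π * I * ↑(∑' k, (10⁻¹ : ℝ) ^ P k)) ^ 10 ^ P N - 1‖
      ≤ 2 * π / (1 - 10⁻¹) * (10⁻¹ : ℝ) ^ ((N + 1) * 10 ^ P N) := by
  obtain ⟨m, hm⟩ := exists_int_abs_pow_mul_tsum_inv_pow_sub_le (b := 10) (by norm_num) hP N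
  push_cast at hm
  calc _ ≤ 2 * π * |((10 ^ P N : ℕ) : ℝ) * ∑' k, (10⁻¹ : ℝ) ^ P k - m| :=
        norm_exp_two_pi_mul_I_pow_sub_one_le _ _ m
    _ ≤ 2 * π * ((10 : ℝ) ^ P N * (10⁻¹ : ℝ) ^ P (N + 1) / (1 - 10⁻¹)) := by
        push_cast; gcongr
    _ = 2 * π / (1 - 10⁻¹) * (10⁻¹ : ℝ) ^ ((N + 1) * 10 ^ P N) := by
        rw [hPN, pow_add, ← mul_assoc, ← mul_pow, mul_inv_cancel₀ (by norm_num), one_pow, one_mul]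
        ring

theorem liminf_zero_general (P : ℕ → ℕ)
    (hPs : ∀ k : ℕ, P (k + 1) = P k + (k + 1) * 10 ^ (P k))
    (β : ℝ) (hβ : β = ∑' k : ℕ, (10 : ℝ) ^ (-(P k : ℤ)))
    (A : ℂ) (hA : A = Complex.exp (2 * Real.pi * Complex.I * β)) :
    Filter.liminf (fun k : ℕ => ‖A ^ k - 1‖ ^ (1 / (k : ℝ))) Filter.atTop = 0 := by
  have hP : StrictMono P := strictMono_nat_of_lt_succ fun n => by
    rw [hPs n]; exact Nat.lt_add_of_pos_right (by positivity)
  have hβ' : β = ∑' k, (10⁻¹ : ℝ) ^ P k := by simp only [hβ, zpow_neg, zpow_natCast, inv_pow]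
  set C : ℝ := 2 * π / (1 - 10⁻¹)
  have hC : 1 ≤ C := by rw [le_div_iff₀ (by norm_num)]; linarith [pi_gt_three]
  have hbound : ∀ N, ‖A ^ 10 ^ P N - 1‖ ^ (1 / ((10 ^ P N : ℕ) : ℝ)) ≤ C * (10⁻¹ : ℝ) ^ (N + 1) :=
    fun N => rpow_one_div_le_of_le_mul_pow (norm_nonneg _) hC (by norm_num) (by positivity)
      (hA ▸ hβ' ▸ norm_exp_two_pi_mul_I_pow_sub_one_le_of_lacunary hP (hPs N))
  have hlim : Tendsto (fun N => C * (10⁻¹ : ℝ) ^ (N + 1)) atTop (𝓝 0) := by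
    simpa using ((tendsto_pow_atTop_nhds_zero_of_lt_one (r := (10⁻¹ : ℝ)) (by norm_num) (by norm_num)).comp
      (tendsto_add_atTop_nat 1)).const_mul C
  exact liminf_eq_zero_of_tendsto_comp (fun k => by positivity)
    ((tendsto_pow_atTop_atTop_of_one_lt (α := ℕ) (by norm_num)).comp hP.tendsto_atTop)
    (squeeze_zero (fun _ => rpow_nonneg (norm_nonneg _) _) hbound hlim)

theorem liminf_zero (P : ℕ → ℕ) (hP0 : P 0 = 1)
    (hPs : ∀ k : ℕ, P (k + 1) = P k + (k + 1) * 10 ^ (P k))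
    (β : ℝ) (hβ : β = ∑' k : ℕ, (10 : ℝ) ^ (-(P k : ℤ)))
    (A : ℂ) (hA : A = Complex.exp (2 * Real.pi * Complex.I * β)) :
    Filter.liminf (fun k : ℕ => ‖A ^ k - 1‖ ^ (1 / (k : ℝ))) Filter.atTop = 0 :=
  liminf_zero_general P hPs β hβ A hA
end

section
/- Let α ∈ (0,1) be irrational with liminf_{m→∞} (inf_{n∈ℤ} |α - n/m|)^{1/m} = 0, and set A = e^{2πiα}. Then for any R > 0, the power series Σ_{m≥2} b_m z^m with b_m = (A-1) / (2(1-A^m) R^{m-2} (m-1)) has radius of convergence 0. -/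
/-!
If `n / m` approximates `α`, then `‖1 - A ^ m‖ = ‖exp (2πi (mα - n)) - 1‖ ≤ 2πm |α - n / m|`.
The liminf hypothesis makes `m ^ 2 * ⨅ n, |α - n / m|` smaller than `ε ^ m` for infinitely many
`m`, whatever `ε > 0`; along those `m` the `m`-th term of the series is at least a fixed multiple of
`(‖z‖ / (R ε)) ^ m`. With `ε = ‖z‖ / R` the terms stay away from `0`, so the series diverges.
-/
open Filter Complex Real

theorem exp_two_pi_I_mul_pow_ne_one {α : ℝ} (hα : Irrational α) {m : ℕ} (hm : m ≠ 0) :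
    exp (2 * π * I * α) ^ m ≠ 1 := by
  rw [← Complex.exp_nat_mul, Ne, Complex.exp_eq_one_iff]
  rintro ⟨n, hn⟩
  have hmα : (m : ℝ) * α = n := by
    have : 2 * π * I * (m * α) = 2 * π * I * n := by linear_combination hn
    exact_mod_cast mul_left_cancel₀ two_pi_I_ne_zero this
  exact hα ⟨n / m, by push_cast; field_simp; linarith⟩

theorem abs_sub_intCast_div_natCast (α : ℝ) (n : ℤ) {m : ℕ} (hm : m ≠ 0) :
    |α - n / m| = |m * α - n| / m := by
  rw [show α - n / m = (m * α - n) / m by field_simp, abs_div, Nat.abs_cast]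

theorem norm_one_sub_exp_two_pi_I_mul_pow_le (α : ℝ) (m : ℕ) (n : ℤ) :
    ‖1 - exp (2 * π * I * α) ^ m‖ ≤ 2 * π * |m * α - n| := by
  have hexp : exp (2 * π * I * α) ^ m = exp (I * ↑(2 * π * (m * α - n))) := by
    rw [← Complex.exp_nat_mul, Complex.exp_eq_exp_iff_exists_int]
    exact ⟨n, by push_cast; ring⟩
  rw [norm_sub_rev, hexp]
  refine Real.norm_exp_I_mul_ofReal_sub_one_le.trans_eq ?_
  rw [Real.norm_eq_abs, abs_mul, abs_of_pos two_pi_pos]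

theorem norm_one_sub_exp_two_pi_I_mul_pow_le_iInf (α : ℝ) (m : ℕ) :
    ‖1 - exp (2 * π * I * α) ^ m‖ ≤ 2 * π * m * ⨅ n : ℤ, |α - n / m| := by
  rcases eq_or_ne m 0 with rfl | hm
  · simp
  rw [← div_le_iff₀' (by positivity)]
  refine le_ciInf fun n => ?_
  rw [div_le_iff₀' (by positivity), abs_sub_intCast_div_natCast α n hm]
  refine (norm_one_sub_exp_two_pi_I_mul_pow_le α m n).trans_eq ?_
  field_simp

theorem iInf_abs_sub_intCast_div_le_one (α : ℝ) {m : ℕ} (hm : m ≠ 0) :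
    ⨅ n : ℤ, |α - n / m| ≤ 1 := by
  refine (ciInf_le ⟨0, by rintro _ ⟨n, rfl⟩; positivity⟩ (round (m * α))).trans ?_
  have hm' : (1 : ℝ) ≤ m := by exact_mod_cast Nat.one_le_iff_ne_zero.mpr hm
  rw [abs_sub_intCast_div_natCast α _ hm, div_le_one (by positivity)]
  linarith [abs_sub_round ((m : ℝ) * α)]

theorem frequently_lt_pow_of_liminf_rpow_eq_zero {x : ℕ → ℝ} (hx : ∀ m, 0 ≤ x m)
    (hbdd : IsBoundedUnder (· ≤ ·) atTop fun m : ℕ => x m ^ (1 / (m : ℝ)))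
    (h : liminf (fun m : ℕ => x m ^ (1 / (m : ℝ))) atTop = 0) {ε : ℝ} (hε : 0 < ε) :
    ∃ᶠ m in atTop, x m < ε ^ m := by
  have hfreq := frequently_lt_of_liminf_lt hbdd.isCoboundedUnder_ge (h.trans_lt hε)
  refine (hfreq.and_eventually (eventually_ne_atTop 0)).mono fun m ⟨hlt, hm⟩ => ?_
  rw [← Real.rpow_inv_natCast_pow (hx m) hm, ← one_div]
  exact pow_lt_pow_left₀ hlt (Real.rpow_nonneg (hx m) _) hm

theorem frequently_pow_mul_lt_pow {x : ℕ → ℝ} (hx : ∀ ε > 0, ∃ᶠ m in atTop, x m < ε ^ m)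
    (k : ℕ) {ε : ℝ} (hε : 0 < ε) : ∃ᶠ m : ℕ in atTop, (m : ℝ) ^ k * x m < ε ^ m := by
  have hsmall : ∀ᶠ m : ℕ in atTop, (m : ℝ) ^ k / 2 ^ m < 1 :=
    (tendsto_pow_const_div_const_pow_of_one_lt k one_lt_two).eventually_lt_const one_pos
  refine ((hx (ε / 2) (by positivity)).and_eventually hsmall).mono fun m ⟨hlt, hm⟩ => ?_
  calc (m : ℝ) ^ k * x m ≤ m ^ k * (ε / 2) ^ m := by gcongr
    _ = m ^ k / 2 ^ m * ε ^ m := by rw [div_pow]; ring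
    _ < ε ^ m := (mul_lt_iff_lt_one_left (by positivity)).mpr hm

theorem le_norm_div_mul_pow {A z : ℂ} {R C : ℝ} (hR : 0 < R) (hC : 0 < C) {m : ℕ}
    (hA : A ^ (m + 2) ≠ 1) (h : (m + 2) * ‖1 - A ^ (m + 2)‖ ≤ C * (‖z‖ / R) ^ (m + 2)) :
    ‖A - 1‖ * R ^ 2 / (2 * C) ≤
      ‖(A - 1) / (2 * (1 - A ^ (m + 2)) * (R : ℂ) ^ m * ((m : ℂ) + 1)) * z ^ (m + 2)‖ := by
  have hc : 0 < ‖1 - A ^ (m + 2)‖ := norm_pos_iff.mpr (sub_ne_zero.mpr hA.symm)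
  have hm : ‖(m : ℂ) + 1‖ = m + 1 := by exact_mod_cast Complex.norm_natCast (m + 1)
  simp only [norm_mul, norm_div, norm_pow, hm, Complex.norm_ofNat, Complex.norm_real,
    Real.norm_of_nonneg hR.le]
  rw [div_mul_eq_mul_div, le_div_iff₀ (by positivity)]
  calc ‖A - 1‖ * R ^ 2 / (2 * C) * (2 * ‖1 - A ^ (m + 2)‖ * R ^ m * (m + 1))
      ≤ ‖A - 1‖ * R ^ 2 / (2 * C) * (2 * ‖1 - A ^ (m + 2)‖ * R ^ m * (m + 2)) := by
        gcongr; linarith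
    _ = ‖A - 1‖ / C * R ^ (m + 2) * ((m + 2) * ‖1 - A ^ (m + 2)‖) := by ring
    _ ≤ ‖A - 1‖ / C * R ^ (m + 2) * (C * (‖z‖ / R) ^ (m + 2)) := by gcongr
    _ = ‖A - 1‖ * ‖z‖ ^ (m + 2) := by rw [div_pow]; field_simp

theorem frequently_natCast_mul_norm_one_sub_exp_pow_le {α : ℝ}
    (h : liminf (fun m : ℕ => (⨅ n : ℤ, |α - n / m|) ^ (1 / (m : ℝ))) atTop = 0)
    {ε : ℝ} (hε : 0 < ε) :
    ∃ᶠ m : ℕ in atTop, m * ‖1 - exp (2 * π * I * α) ^ m‖ ≤ 2 * π * ε ^ m := by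
  have hd : ∀ m : ℕ, 0 ≤ ⨅ n : ℤ, |α - n / m| := fun m => Real.iInf_nonneg fun n => abs_nonneg _
  have hbdd : IsBoundedUnder (· ≤ ·) atTop fun m : ℕ => (⨅ n : ℤ, |α - n / m|) ^ (1 / (m : ℝ)) :=
    isBoundedUnder_of_eventually_le <| (eventually_ne_atTop 0).mono fun m hm =>
      Real.rpow_le_one (hd m) (iInf_abs_sub_intCast_div_le_one α hm) (by positivity)
  have hdecay := frequently_pow_mul_lt_pow
    (fun ε hε => frequently_lt_pow_of_liminf_rpow_eq_zero hd hbdd h hε) 2 hε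
  refine hdecay.mono fun m hm => ?_
  calc m * ‖1 - exp (2 * π * I * α) ^ m‖ ≤ m * (2 * π * m * ⨅ n : ℤ, |α - n / m|) := by
        gcongr; exact norm_one_sub_exp_two_pi_I_mul_pow_le_iInf α m
    _ = 2 * π * (m ^ 2 * ⨅ n : ℤ, |α - n / m|) := by ring
    _ ≤ 2 * π * ε ^ m := by gcongr

theorem formal_solution_divergent_general (α : ℝ)
    (hirr : Irrational α)
    (hliminf : Filter.liminf
        (fun m : ℕ => (⨅ n : ℤ, |α - (n : ℝ) / (m : ℝ)|) ^ (1 / (m : ℝ)))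
        Filter.atTop = 0)
    (A : ℂ) (hA : A = Complex.exp (2 * Real.pi * Complex.I * α))
    (R : ℝ) (hR : 0 < R) :
    ∀ z : ℂ, z ≠ 0 →
      ¬ Summable (fun m : ℕ =>
        (A - 1) / (2 * (1 - A ^ (m + 2)) * (R : ℂ) ^ m * ((m : ℂ) + 1))
          * z ^ (m + 2)) := by
  intro z hz hsum
  subst hA
  have hA1 : exp (2 * π * I * α) - 1 ≠ 0 := by
    simpa [sub_ne_zero] using exp_two_pi_I_mul_pow_ne_one hirr one_ne_zero
  have hδ : 0 < ‖exp (2 * π * I * α) - 1‖ * R ^ 2 / (2 * (2 * π)) := by positivity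
  have hsmall :=
    (tendsto_zero_iff_norm_tendsto_zero.mp hsum.tendsto_atTop_zero).eventually_lt_const hδ
  have hlarge := frequently_natCast_mul_norm_one_sub_exp_pow_le hliminf
    (show 0 < ‖z‖ / R by positivity)
  rw [← map_add_atTop_eq_nat 2, frequently_map] at hlarge
  obtain ⟨m, hm, hm'⟩ := (hlarge.and_eventually hsmall).exists
  refine hm'.not_ge (le_norm_div_mul_pow hR two_pi_pos
    (exp_two_pi_I_mul_pow_ne_one hirr (Nat.succ_ne_zero _)) ?_)
  exact_mod_cast hm

/-- If `α` is irrational with `liminf (inf_n |α - n/m|)^{1/m} = 0`, the formal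
solution series `∑ b_m z^m` with
`b_m = (A-1)/(2(1-A^m) R^{m-2} (m-1))` has radius of convergence `0`, i.e. it
diverges at every nonzero `z`. -/
theorem formal_solution_divergent (α : ℝ) (hα0 : 0 < α) (hα1 : α < 1)
    (hirr : Irrational α)
    (hliminf : Filter.liminf
        (fun m : ℕ => (⨅ n : ℤ, |α - (n : ℝ) / (m : ℝ)|) ^ (1 / (m : ℝ)))
        Filter.atTop = 0)
    (A : ℂ) (hA : A = Complex.exp (2 * Real.pi * Complex.I * α))
    (R : ℝ) (hR : 0 < R) :
    ∀ z : ℂ, z ≠ 0 →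
      ¬ Summable (fun m : ℕ =>
        (A - 1) / (2 * (1 - A ^ (m + 2)) * (R : ℂ) ^ m * ((m : ℂ) + 1))
          * z ^ (m + 2)) :=
  formal_solution_divergent_general α hirr hliminf A hA R hR
end
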